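/- Let (M, 𝒜, μ) be a finite measure space, X = L²(μ) the real Hilbert space with inner product ⟪f,g⟫ = ∫ f·g dμ, and J : X → ℝ absolutely one-homogeneous and translation invariant. Suppose C ⊆ M is measurable with μ(C) > 0 and μ(M \ C) > 0, and C is an eigenset of J with eigenvalue λ and ratio β = μ(C)/μ(M \ C). Then λ·μ(C) = J(χ_C). (Claim: for an eigenset, the eigenvalue times the area equals the total variation of the indicator, i.e. λ|C| = NETV(C).) -/

import Mathlib

open MeasureTheory RealInnerProductSpace

/-- `p` is a subgradient of `J` at `u`. -/
def IsSubgradientAt {X : Type*} [NormedAddCommGroup X] [InnerProductSpace ℝ X]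
    (J : X → ℝ) (p u : X) : Prop :=
  ∀ v : X, J v ≥ J u + ⟪p, v - u⟫

/-- The indicator function of a measurable set as an element of `L²(μ)`. -/
noncomputable def chi {M : Type*} [MeasurableSpace M] (μ : Measure M) [IsFiniteMeasure μ]
    {C : Set M} (hC : MeasurableSet C) : Lp ℝ 2 μ :=
  indicatorConstLp 2 hC (measure_ne_top μ C) (1 : ℝ)

/-- `C` is an eigenset of `J` with eigenvalue `lam` and ratio `β > 0`:
`ψ := χ_C − β • χ_{M \ C}` satisfies that `lam • ψ` is a subgradient of `J` at `ψ`. -/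
def IsEigenset {M : Type*} [MeasurableSpace M] (μ : Measure M) [IsFiniteMeasure μ]
    (J : Lp ℝ 2 μ → ℝ) {C : Set M} (hC : MeasurableSet C) (lam β : ℝ) : Prop :=
  0 < β ∧ IsSubgradientAt J
    (lam • (chi μ hC - β • chi μ hC.compl)) (chi μ hC - β • chi μ hC.compl)

/-!
Testing the subgradient inequality at `0` and `2ψ` shows that a one-homogeneous `J` satisfies
`J ψ = λ ‖ψ‖²` at an eigenfunction `ψ = χ_C − β χ_{Cᶜ}`. Since `ψ = (1 + β) χ_C − β 1`,
translation invariance and homogeneity give `J ψ = (1 + β) J(χ_C)`, while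
`‖ψ‖² = |C| + β² |Cᶜ| = (1 + β) |C|` for `β = |C| / |Cᶜ|`. Cancel `1 + β`.
-/

theorem IsSubgradientAt.apply_eq_inner {X : Type*} [NormedAddCommGroup X]
    [InnerProductSpace ℝ X] {J : X → ℝ} (hhom : ∀ (α : ℝ) (u : X), J (α • u) = |α| * J u)
    {p u : X} (h : IsSubgradientAt J p u) : J u = ⟪p, u⟫ := by
  have hzero : J 0 = 0 := by simpa using hhom 0 u
  have hle := h 0
  have hge := h ((2 : ℝ) • u)
  rw [hzero, zero_sub, inner_neg_right] at hle
  rw [hhom, show (2 : ℝ) • u - u = u by module] at hge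
  norm_num at hge
  linarith

section Indicator

variable {M : Type*} [MeasurableSpace M] (μ : Measure M) [IsFiniteMeasure μ]

theorem inner_chi_chi {s t : Set M} (hs : MeasurableSet s) (ht : MeasurableSet t) :
    ⟪chi μ hs, chi μ ht⟫ = μ.real (s ∩ t) :=
  L2.inner_indicatorConstLp_one_indicatorConstLp_one hs ht

theorem chi_univ_eq_chi_add_chi_compl {C : Set M} (hC : MeasurableSet C) :
    chi μ MeasurableSet.univ = chi μ hC + chi μ hC.compl := by
  simp only [chi, ← indicatorConstLp_disjoint_union hC hC.compl (measure_ne_top μ C)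
    (measure_ne_top μ Cᶜ) disjoint_compl_right, Set.union_compl_self]

theorem inner_self_chi_sub_smul_chi_compl {C : Set M} (hC : MeasurableSet C) (β : ℝ) :
    ⟪chi μ hC - β • chi μ hC.compl, chi μ hC - β • chi μ hC.compl⟫ =
      μ.real C + β ^ 2 * μ.real Cᶜ := by
  simp only [inner_sub_left, inner_sub_right, real_inner_smul_left, real_inner_smul_right,
    inner_chi_chi, Set.inter_self, Set.inter_compl_self, Set.compl_inter_self,
    measureReal_empty]
  ring

theorem apply_chi_sub_smul_chi_compl {J : Lp ℝ 2 μ → ℝ}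
    (hhom : ∀ (α : ℝ) (u : Lp ℝ 2 μ), J (α • u) = |α| * J u)
    (htrans : ∀ (u : Lp ℝ 2 μ) (c : ℝ), J (u + c • chi μ MeasurableSet.univ) = J u)
    {C : Set M} (hC : MeasurableSet C) (β : ℝ) :
    J (chi μ hC - β • chi μ hC.compl) = |1 + β| * J (chi μ hC) := by
  have hψ : chi μ hC - β • chi μ hC.compl =
      (1 + β) • chi μ hC + (-β) • chi μ MeasurableSet.univ := by
    rw [chi_univ_eq_chi_add_chi_compl μ hC]
    module
  rw [hψ, htrans, hhom]

end Indicator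

theorem eigenset_eigenvalue_mul_area_eq_J_general
    {M : Type*} [MeasurableSpace M] (μ : Measure M) [IsFiniteMeasure μ]
    (J : Lp ℝ 2 μ → ℝ)
    (hhom : ∀ (α : ℝ) (u : Lp ℝ 2 μ), J (α • u) = |α| * J u)
    (htrans : ∀ (u : Lp ℝ 2 μ) (c : ℝ),
      J (u + c • chi μ (MeasurableSet.univ : MeasurableSet (Set.univ : Set M))) = J u)
    {C : Set M} (hC : MeasurableSet C)
    (lam : ℝ)
    (heig : IsEigenset μ J hC lam ((μ C).toReal / (μ Cᶜ).toReal)) :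
    lam * (μ C).toReal = J (chi μ hC) := by
  set β := (μ C).toReal / (μ Cᶜ).toReal
  have hβ : 0 ≤ β := by positivity
  have key := heig.2.apply_eq_inner hhom
  rw [apply_chi_sub_smul_chi_compl μ hhom htrans, abs_of_nonneg (by linarith),
    real_inner_smul_left, inner_self_chi_sub_smul_chi_compl, measureReal_def,
    measureReal_def] at key
  -- `β² |Cᶜ| = β |C|` holds even when `|Cᶜ| = 0`, because then `β = 0`.
  have hsq : β ^ 2 * (μ Cᶜ).toReal = β * (μ C).toReal := by
    rcases eq_or_ne (μ Cᶜ).toReal 0 with hzero | hne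
    · simp [β, hzero]
    · simp only [β]
      field_simp
  refine mul_left_cancel₀ (show 1 + β ≠ 0 by positivity) ?_
  linear_combination -key - lam * hsq

/-- For an eigenset, the eigenvalue times the area equals the total variation of the
indicator: `λ · |C| = J(χ_C)`. -/
theorem eigenset_eigenvalue_mul_area_eq_J
    {M : Type*} [MeasurableSpace M] (μ : Measure M) [IsFiniteMeasure μ]
    (J : Lp ℝ 2 μ → ℝ)
    (hhom : ∀ (α : ℝ) (u : Lp ℝ 2 μ), J (α • u) = |α| * J u)
    (htrans : ∀ (u : Lp ℝ 2 μ) (c : ℝ),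
      J (u + c • chi μ (MeasurableSet.univ : MeasurableSet (Set.univ : Set M))) = J u)
    {C : Set M} (hC : MeasurableSet C) (hCpos : 0 < μ C) (hCcpos : 0 < μ Cᶜ)
    (lam : ℝ)
    (heig : IsEigenset μ J hC lam ((μ C).toReal / (μ Cᶜ).toReal)) :
    lam * (μ C).toReal = J (chi μ hC) :=
  eigenset_eigenvalue_mul_area_eq_J_general μ J hhom htrans hC lam heig
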